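/- Let r ≥ 2 and let I be a nonempty finite set with a free μ_r-action. For T ∈ T(r,I) and an internal vertex v of T, let J_v ⊆ I be the set of leaves of the subtree rooted at v; for a μ_r-orbit O of non-μ_r-fixed internal vertices, let J_O := ∪_{v∈O} J_v and π_O := {J_v : v ∈ O}. Then the set S_T := {X_{J_v} : v a non-root μ_r-fixed internal vertex of T} ∪ {X_{J_O, π_O} : O a μ_r-orbit of non-μ_r-fixed internal vertices} is a nested subset of F*, and the map T ↦ S_T is a bijection from T(r,I) onto the set of all nested subsets of F*. -/

import Mathlib

open scoped Classical

noncomputable section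

/-- The group `μ_r` of complex `r`-th roots of unity. -/
abbrev mu (r : ℕ) : Type := rootsOfUnity r ℂ

/-- A family of subsets is laminar if any two members are nested or disjoint. -/
def IsLaminar {α : Type} (F : Set (Set α)) : Prop :=
  ∀ J ∈ F, ∀ K ∈ F, J ⊆ K ∨ K ⊆ J ∨ Disjoint J K

/-- `IsHierarchyOn S F` encodes an isomorphism class of rooted trees with leaf set `S` in
which every internal vertex has at least two children, via the family
`F = {J_v : v a vertex}` of the sets of leaves lying below the vertices (so the internal
vertices of the tree correspond to the members `J ∈ F` with `|J| ≥ 2`). -/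
def IsHierarchyOn {α : Type} (S : Set α) (F : Set (Set α)) : Prop :=
  (∀ J ∈ F, J.Nonempty ∧ J ⊆ S) ∧ (∀ i ∈ S, ({i} : Set α) ∈ F) ∧ S ∈ F ∧ IsLaminar F ∧
  (∀ K ∈ F, ∀ J ∈ F, J ⊂ K → ¬(∀ L ∈ F, L ⊂ K → L ⊆ J))

/-- The action of `ζ ∈ μ_r` on subsets of a `μ_r`-set. -/
def zdot {r : ℕ} {I : Type} [MulAction (mu r) I] (ζ : mu r) (J : Set I) : Set I :=
  (ζ • ·) '' J

/-- A subset is `μ_r`-fixed if it is stable under every `ζ ∈ μ_r`. -/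
def IsFixedSet (r : ℕ) {I : Type} [MulAction (mu r) I] (J : Set I) : Prop :=
  ∀ ζ : mu r, zdot ζ J = J

/-- `C` is a child of the vertex `K` in the tree encoded by `F`. -/
def IsChild {I : Type} (F : Set (Set I)) (C K : Set I) : Prop :=
  C ∈ F ∧ C ⊂ K ∧ ∀ L ∈ F, L ⊂ K → C ⊆ L → L = C

/-- `IsTrHierarchyOn r S F` encodes membership in `T(r,S)`. -/
def IsTrHierarchyOn (r : ℕ) {I : Type} [MulAction (mu r) I] (S : Set I)
    (F : Set (Set I)) : Prop :=
  IsHierarchyOn S F ∧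
  (∀ ζ : mu r, ∀ J ∈ F, zdot ζ J ∈ F) ∧
  (∀ K ∈ F, IsFixedSet r K → ∀ C C' : Set I, IsChild F C K → IsChild F C' K →
    IsFixedSet r C → IsFixedSet r C' → C = C') ∧
  (∀ K ∈ F, IsFixedSet r K → ∀ C : Set I, IsChild F C K → ¬IsFixedSet r C →
    ∀ ζ : mu r, zdot ζ C = C → ζ = 1)

variable (r : ℕ) (I : Type) [MulAction (mu r) I]

/-- The reflection representation `V(r,I) = {z ∈ ℂ^I : z_{ζ·i} = ζ z_i}`. -/
def Vsp : Set (I → ℂ) :=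
  {z | ∀ (ζ : mu r) (i : I), z (ζ • i) = ((ζ : ℂˣ) : ℂ) * z i}

/-- The subspace `X_J = {z ∈ V(r,I) : z_j = 0 for j ∈ J}`. -/
def XJ (J : Set I) : Set (I → ℂ) := {z ∈ Vsp r I | ∀ j ∈ J, z j = 0}

/-- The subspace `X_{J,π} = {z ∈ V(r,I) : z_j = z_{j'} for j, j' in the same part of π}`
(where `J = ⋃₀ π`). -/
def XJpi (π : Set (Set I)) : Set (I → ℂ) :=
  {z ∈ Vsp r I | ∀ P ∈ π, ∀ j ∈ P, ∀ j' ∈ P, z j = z j'}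

/-- `J` is a `μ_r`-stable subset. -/
def IsStable (J : Set I) : Prop := ∀ (ζ : mu r) (x : I), x ∈ J → ζ • x ∈ J

/-- `π` is a partition (of its union) into `r` parts on which `μ_r` acts freely and
transitively. -/
def IsFTPartition (π : Set (Set I)) : Prop :=
  (∀ P ∈ π, (P : Set I).Nonempty) ∧ (π : Set (Set I)).PairwiseDisjoint id ∧
  (∀ (ζ : mu r), ∀ P ∈ π, zdot ζ P ∈ π) ∧
  (∀ P ∈ π, ∀ ζ : mu r, zdot ζ P = P → ζ = 1) ∧
  (∀ P ∈ π, ∀ Q ∈ π, ∃ ζ : mu r, zdot ζ P = Q) ∧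
  (π : Set (Set I)).ncard = r

/-- The set `F` of irreducible subspaces: the `X_J` for `∅ ≠ J ⊆ I` stable, and the
`X_{J,π}` for stable `J` with `|J| ≥ 2r` and `π` a partition of `J` into `r` parts
permuted freely and transitively by `μ_r`. -/
def Fcal : Set (Set (I → ℂ)) :=
  {X | (∃ J : Set I, J.Nonempty ∧ IsStable r I J ∧ X = XJ r I J) ∨
       (∃ π : Set (Set I), IsFTPartition r I π ∧ 2 * r ≤ (⋃₀ π : Set I).ncard ∧
         X = XJpi r I π)}

/-- `F* = F ∖ {X_I}`. -/
def Fstar : Set (Set (I → ℂ)) := Fcal r I \ {XJ r I Set.univ}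

/-- `S ⊆ F*` is nested if for every collection of at least two pairwise incomparable
members of `S`, the intersection of the collection does not belong to `F`. -/
def IsNested (S : Set (Set (I → ℂ))) : Prop :=
  S ⊆ Fstar r I ∧
  ∀ C : Finset (Set (I → ℂ)), ↑C ⊆ S → 2 ≤ C.card →
    (∀ Y ∈ C, ∀ Y' ∈ C, Y ≠ Y' → ¬Y ⊆ Y') → ⋂₀ (C : Set (Set (I → ℂ))) ∉ Fcal r I

/-- The map `T ↦ S_T`: to a tree `T ∈ T(r,I)` (encoded by the hierarchy `F`, whose
internal vertices `v` correspond to the members `J_v = J ∈ F` with `|J| ≥ 2`) we attach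
the set consisting of the `X_{J_v}` for `v` a non-root `μ_r`-fixed internal vertex,
and the `X_{J_O, π_O}` for `O` a `μ_r`-orbit of non-`μ_r`-fixed internal vertices
(where `π_O = {ζ·J_v : ζ ∈ μ_r}` for any `v ∈ O`). -/
def nestedOfTree (F : Set (Set I)) : Set (Set (I → ℂ)) :=
  {X | ∃ J ∈ F, 2 ≤ (J : Set I).ncard ∧ IsFixedSet r J ∧ J ≠ Set.univ ∧ X = XJ r I J} ∪
  {X | ∃ J ∈ F, 2 ≤ (J : Set I).ncard ∧ ¬IsFixedSet r J ∧
    X = XJpi r I {P : Set I | ∃ ζ : mu r, P = zdot ζ J}}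


/-!
Every member of `F` has the form `X_{A,Ps}`: the `z ∈ V(r,I)` vanishing on a stable set `A` and
constant on the blocks of a family `Ps` of disjoint sets permuted freely by `μ_r`. The pair
`(A, Ps)` can be read off from the subspace, as its common zero set and its nontrivial classes of
coordinates forced to be equal (test vectors supported on single orbits witness this), so
inclusions and intersections of members of `F` become combinatorics of such pairs.

The intersection of an antichain in `S_T` is `X_{A,Ps}` with `A` the union of its fixed vertices
and `Ps` the union of its orbits; since the fixed vertices of `T` form a chain, this lies in `F`
only when the antichain has a single member. Conversely, for a nested set `S`, the root, the
leaves, the `J` with `X_J ∈ S` and the blocks of the `π` with `X_{J,π} ∈ S` form a laminar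
family, because two crossing members would give incomparable members of `S` whose intersection is
again in `F`: for two partitions it is `X_{J ∪ J'}`, or the `X_{J'',π''}` whose blocks are the
translates of a class of the equivalence relation generated by both. This family is a tree in
`T(r,I)`, and the two constructions are mutually inverse.
-/

open Set

def IsFreeAction : Prop := ∀ (ζ : mu r) (x : I), ζ • x = x → ζ = 1

variable {r I}

section RootsOfUnity

lemma mu_coe_injective : Function.Injective (fun ζ : mu r => ((ζ : ℂˣ) : ℂ)) :=
  rootsOfUnity.coe_injective

lemma card_mu [NeZero r] : Nat.card (mu r) = r := Complex.card_rootsOfUnity r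

lemma nontrivial_mu (hr : 2 ≤ r) : Nontrivial (mu r) :=
  have : NeZero r := ⟨by omega⟩
  Finite.one_lt_card_iff_nontrivial.mp (by rw [card_mu]; omega)

end RootsOfUnity

section SetAction

lemma mem_zdot {ζ : mu r} {A : Set I} {x : I} : x ∈ zdot ζ A ↔ ζ⁻¹ • x ∈ A :=
  ⟨by rintro ⟨a, ha, rfl⟩; simpa using ha, fun h => ⟨ζ⁻¹ • x, h, smul_inv_smul ζ x⟩⟩

lemma smul_mem_zdot {ζ : mu r} {A : Set I} {x : I} : ζ • x ∈ zdot ζ A ↔ x ∈ A := by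
  simp [mem_zdot]

@[simp] lemma zdot_one (A : Set I) : zdot (1 : mu r) A = A := by ext; simp [mem_zdot]

lemma zdot_zdot (ζ η : mu r) (A : Set I) : zdot ζ (zdot η A) = zdot (ζ * η) A := by
  ext; simp [mem_zdot, mul_smul]

lemma zdot_mono {ζ : mu r} {A B : Set I} (h : A ⊆ B) : zdot ζ A ⊆ zdot ζ B := image_mono h

lemma zdot_nonempty {ζ : mu r} {A : Set I} : (zdot ζ A).Nonempty ↔ A.Nonempty := image_nonempty

lemma ncard_zdot (ζ : mu r) (A : Set I) : (zdot ζ A).ncard = A.ncard :=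
  ncard_image_of_injective _ (MulAction.injective ζ)

lemma zdot_singleton (ζ : mu r) (x : I) : zdot ζ ({x} : Set I) = {ζ • x} := image_singleton

lemma isFixedSet_univ : IsFixedSet r (univ : Set I) := fun _ => by ext; simp [mem_zdot]

lemma isFixedSet_zdot_iff {ζ : mu r} {J : Set I} : IsFixedSet r (zdot ζ J) ↔ IsFixedSet r J := by
  have hcomm : ∀ η : mu r, zdot η (zdot ζ J) = zdot ζ (zdot η J) := fun η => by
    rw [zdot_zdot, zdot_zdot, mul_comm]
  refine ⟨fun h η => image_injective.mpr (MulAction.injective ζ) ?_, fun h η => ?_⟩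
  · change zdot ζ (zdot η J) = zdot ζ J
    rw [← hcomm, h η]
  · rw [hcomm, h η]

lemma isStable_iff_isFixedSet {A : Set I} : IsStable r I A ↔ IsFixedSet r A := by
  refine ⟨fun h ζ => Subset.antisymm ?_ fun x hx => ?_, fun h ζ x hx => ?_⟩
  · rintro _ ⟨x, hx, rfl⟩; exact h ζ x hx
  · exact mem_zdot.mpr (h ζ⁻¹ x hx)
  · rw [← h ζ]; exact ⟨x, hx, rfl⟩

lemma isStable_sUnion {Ps : Set (Set I)} (h : ∀ (ζ : mu r), ∀ P ∈ Ps, zdot ζ P ∈ Ps) :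
    IsStable r I (⋃₀ Ps) := by
  rintro ζ x ⟨P, hP, hx⟩
  exact ⟨zdot ζ P, h ζ P hP, ⟨x, hx, rfl⟩⟩

lemma IsStable.union {A B : Set I} (hA : IsStable r I A) (hB : IsStable r I B) :
    IsStable r I (A ∪ B) := fun ζ x hx => hx.imp (hA ζ x) (hB ζ x)

lemma not_isFixedSet_singleton [Nontrivial (mu r)] (hfree : IsFreeAction r I) (x : I) :
    ¬IsFixedSet r ({x} : Set I) := fun h => by
  obtain ⟨ζ, hζ⟩ := exists_ne (1 : mu r)
  have := h ζ
  rw [zdot_singleton, singleton_eq_singleton_iff] at this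
  exact hζ (hfree ζ x this)

lemma two_le_ncard_of_isStable [Nontrivial (mu r)] [Finite I] (hfree : IsFreeAction r I)
    {K : Set I} (hK : IsStable r I K) (hne : K.Nonempty) : 2 ≤ K.ncard := by
  obtain ⟨x, hx⟩ := hne
  obtain ⟨ζ, hζ⟩ := exists_ne (1 : mu r)
  exact one_lt_ncard_iff_nontrivial.mpr ⟨x, hx, ζ • x, hK ζ x hx, fun h => hζ (hfree ζ x h.symm)⟩

end SetAction

section TestVectors

variable (r) in
def IsTransversal (T : Set I) : Prop := ∀ t ∈ T, ∀ ζ : mu r, ζ • t ∈ T → ζ = 1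

lemma isTransversal_singleton (hfree : IsFreeAction r I) (x : I) :
    IsTransversal r ({x} : Set I) := by
  rintro t rfl ζ h
  exact hfree ζ t h

variable (r) in
/-- For a transversal `T`, the equivariant vector with value `ζ` at `ζ • t` (`t ∈ T`), vanishing
off the orbits of `T`. -/
def transVec (T : Set I) (x : I) : ℂ :=
  if h : ∃ ζ : mu r, ζ⁻¹ • x ∈ T then ((h.choose : ℂˣ) : ℂ) else 0

lemma transVec_smul {T : Set I} (hT : IsTransversal r T) {t : I} (ht : t ∈ T) (ζ : mu r) :
    transVec r T (ζ • t) = ((ζ : ℂˣ) : ℂ) := by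
  have h : ∃ η : mu r, η⁻¹ • ζ • t ∈ T := ⟨ζ, by simpa using ht⟩
  rw [transVec, dif_pos h]
  have := hT t ht (h.choose⁻¹ * ζ) (by simpa [mul_smul] using h.choose_spec)
  rw [inv_mul_eq_one.mp this]

lemma transVec_self {T : Set I} (hT : IsTransversal r T) {t : I} (ht : t ∈ T) :
    transVec r T t = 1 := by
  simpa using transVec_smul hT ht 1

lemma transVec_of_forall_not_mem {T : Set I} {x : I} (h : ∀ ζ : mu r, ζ • x ∉ T) :
    transVec r T x = 0 :=
  dif_neg fun ⟨ζ, hζ⟩ => h ζ⁻¹ hζ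

lemma transVec_mem_Vsp {T : Set I} (hT : IsTransversal r T) : transVec r T ∈ Vsp r I := by
  intro ζ x
  by_cases hx : ∃ η : mu r, η⁻¹ • x ∈ T
  · obtain ⟨η, hη⟩ := hx
    obtain ⟨t, ht, rfl⟩ : ∃ t ∈ T, η • t = x := ⟨_, hη, smul_inv_smul η x⟩
    rw [smul_smul, transVec_smul hT ht, transVec_smul hT ht]
    push_cast; ring
  · simp only [not_exists] at hx
    rw [transVec_of_forall_not_mem fun η => by simpa [smul_smul] using hx (η * ζ)⁻¹,
      transVec_of_forall_not_mem fun η => by simpa using hx η⁻¹, mul_zero]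

lemma eq_of_transVec_eq_one {T : Set I} (hT : IsTransversal r T) {y : I}
    (h : transVec r T y = 1) : y ∈ T := by
  by_cases hy : ∃ ζ : mu r, ζ • y ∈ T
  · obtain ⟨ζ, hζ⟩ := hy
    rw [← inv_smul_smul ζ y, transVec_smul hT hζ] at h
    rw [← inv_smul_smul ζ y, mu_coe_injective (h.trans (by simp) : _ = ((1 : mu r) : ℂˣ).val)]
    simpa using hζ
  · simp only [not_exists] at hy
    simp [transVec_of_forall_not_mem hy] at h

end TestVectors

section Recovery

variable (r) in
def XApi (A : Set I) (Ps : Set (Set I)) : Set (I → ℂ) :=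
  {z ∈ Vsp r I | (∀ a ∈ A, z a = 0) ∧ ∀ P ∈ Ps, ∀ j ∈ P, ∀ j' ∈ P, z j = z j'}

lemma XJ_eq_XApi (J : Set I) : XJ r I J = XApi r J ∅ := by ext; simp [XJ, XApi]

lemma XJpi_eq_XApi (π : Set (Set I)) : XJpi r I π = XApi r ∅ π := by ext; simp [XJpi, XApi]

variable (r) in
structure IsAdmissible (A : Set I) (Ps : Set (Set I)) : Prop where
  isStable : IsStable r I A
  nontrivial : ∀ P ∈ Ps, P.Nontrivial
  pairwiseDisjoint : Ps.PairwiseDisjoint id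
  zdot_mem : ∀ (ζ : mu r), ∀ P ∈ Ps, zdot ζ P ∈ Ps
  eq_one_of_zdot_eq : ∀ P ∈ Ps, ∀ ζ : mu r, zdot ζ P = P → ζ = 1
  disjoint : ∀ P ∈ Ps, Disjoint P A

namespace IsAdmissible

variable {A : Set I} {Ps : Set (Set I)}

lemma eq_zdot_of_smul_mem (hc : IsAdmissible r A Ps) {P Q : Set I} (hP : P ∈ Ps) (hQ : Q ∈ Ps)
    {p : I} (hp : p ∈ P) {ζ : mu r} (h : ζ • p ∈ Q) : Q = zdot ζ P :=
  hc.pairwiseDisjoint.elim_set hQ (hc.zdot_mem ζ P hP) _ h ⟨p, hp, rfl⟩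

lemma isTransversal (hc : IsAdmissible r A Ps) {P : Set I} (hP : P ∈ Ps) :
    IsTransversal r P := fun _ ht ζ h =>
  hc.eq_one_of_zdot_eq P hP ζ (hc.eq_zdot_of_smul_mem hP hP ht h).symm

end IsAdmissible

lemma transVec_mem_XApi {A : Set I} {Ps : Set (Set I)} (hA : IsStable r I A) {T : Set I}
    (hT : IsTransversal r T) (hTA : Disjoint T A)
    (hPs : ∀ Q ∈ Ps, (∃ ζ : mu r, Q = zdot ζ T) ∨ ∀ q ∈ Q, ∀ ζ : mu r, ζ • q ∉ T) :
    transVec r T ∈ XApi r A Ps := by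
  refine ⟨transVec_mem_Vsp hT, fun a ha => transVec_of_forall_not_mem fun ζ h =>
    disjoint_left.mp hTA h (hA ζ a ha), fun Q hQ j hj j' hj' => ?_⟩
  rcases hPs Q hQ with ⟨ζ, rfl⟩ | hQ
  · obtain ⟨t, ht, rfl⟩ := hj
    obtain ⟨t', ht', rfl⟩ := hj'
    rw [transVec_smul hT ht, transVec_smul hT ht']
  · rw [transVec_of_forall_not_mem (hQ j hj), transVec_of_forall_not_mem (hQ j' hj')]

namespace IsAdmissible

variable {A : Set I} {Ps : Set (Set I)}

lemma transVec_mem (hc : IsAdmissible r A Ps) {P : Set I} (hP : P ∈ Ps) :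
    transVec r P ∈ XApi r A Ps := by
  refine transVec_mem_XApi hc.isStable (hc.isTransversal hP) (hc.disjoint P hP) fun Q hQ => ?_
  by_cases h : ∃ q ∈ Q, ∃ ζ : mu r, ζ • q ∈ P
  · obtain ⟨q, hq, ζ, hζ⟩ := h
    exact Or.inl ⟨ζ⁻¹, hc.eq_zdot_of_smul_mem hP hQ hζ (by simpa using hq)⟩
  · simp only [not_exists, not_and] at h
    exact Or.inr h

lemma transVec_singleton_mem (hc : IsAdmissible r A Ps) (hfree : IsFreeAction r I) {x : I}
    (hxA : x ∉ A) (hx : ∀ P ∈ Ps, x ∉ P) : transVec r {x} ∈ XApi r A Ps := by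
  refine transVec_mem_XApi hc.isStable (isTransversal_singleton hfree x)
    (disjoint_singleton_left.mpr hxA) fun Q hQ => Or.inr fun q hq ζ h => ?_
  rw [mem_singleton_iff] at h
  exact hx _ (hc.zdot_mem ζ Q hQ) (h ▸ ⟨q, hq, rfl⟩)

end IsAdmissible

def zeroSet (X : Set (I → ℂ)) : Set I := {x | ∀ z ∈ X, z x = 0}

def forcedClass (X : Set (I → ℂ)) (j : I) : Set I := {j' | ∀ z ∈ X, z j = z j'}

def blocksOf (X : Set (I → ℂ)) : Set (Set I) :=
  {C | ∃ j ∉ zeroSet X, C = forcedClass X j ∧ C.Nontrivial}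

lemma zeroSet_anti {X Y : Set (I → ℂ)} (h : X ⊆ Y) : zeroSet Y ⊆ zeroSet X :=
  fun _ hx z hz => hx z (h hz)

lemma subset_forcedClass {X : Set (I → ℂ)} {A : Set I} {Ps : Set (Set I)}
    (h : X ⊆ XApi r A Ps) {P : Set I} (hP : P ∈ Ps) {j : I} (hj : j ∈ P) :
    P ⊆ forcedClass X j :=
  fun _ hj' _ hz => (h hz).2.2 P hP j hj _ hj'

namespace IsAdmissible

variable {A : Set I} {Ps : Set (Set I)}

lemma zeroSet_XApi (hc : IsAdmissible r A Ps) (hfree : IsFreeAction r I) :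
    zeroSet (XApi r A Ps) = A := by
  refine Subset.antisymm (fun x hx => ?_) fun a ha z hz => hz.2.1 a ha
  by_contra hxA
  by_cases hxP : ∃ P ∈ Ps, x ∈ P
  · obtain ⟨P, hP, hxP⟩ := hxP
    simpa [transVec_self (hc.isTransversal hP) hxP] using hx _ (hc.transVec_mem hP)
  · simp only [not_exists, not_and] at hxP
    simpa [transVec_self (isTransversal_singleton hfree x) rfl] using
      hx _ (hc.transVec_singleton_mem hfree hxA hxP)

lemma forcedClass_XApi_of_mem (hc : IsAdmissible r A Ps) {P : Set I} (hP : P ∈ Ps) {j : I}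
    (hj : j ∈ P) : forcedClass (XApi r A Ps) j = P :=
  Subset.antisymm (fun _ h => eq_of_transVec_eq_one (hc.isTransversal hP)
    ((h _ (hc.transVec_mem hP)).symm.trans (transVec_self (hc.isTransversal hP) hj)))
    (subset_forcedClass subset_rfl hP hj)

lemma forcedClass_XApi_of_forall_not_mem (hc : IsAdmissible r A Ps) (hfree : IsFreeAction r I)
    {j : I} (hjA : j ∉ A) (hj : ∀ P ∈ Ps, j ∉ P) : forcedClass (XApi r A Ps) j = {j} :=
  Subset.antisymm (fun _ h => eq_of_transVec_eq_one (isTransversal_singleton hfree j)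
    ((h _ (hc.transVec_singleton_mem hfree hjA hj)).symm.trans
      (transVec_self (isTransversal_singleton hfree j) rfl)))
    (singleton_subset_iff.mpr fun _ _ => rfl)

lemma blocksOf_XApi (hc : IsAdmissible r A Ps) (hfree : IsFreeAction r I) :
    blocksOf (XApi r A Ps) = Ps := by
  ext C
  simp only [blocksOf, hc.zeroSet_XApi hfree]
  constructor
  · rintro ⟨j, hjA, rfl, hC⟩
    by_cases hj : ∃ P ∈ Ps, j ∈ P
    · obtain ⟨P, hP, hjP⟩ := hj
      rwa [hc.forcedClass_XApi_of_mem hP hjP]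
    · simp only [not_exists, not_and] at hj
      rw [hc.forcedClass_XApi_of_forall_not_mem hfree hjA hj] at hC
      exact absurd hC not_nontrivial_singleton
  · intro hC
    obtain ⟨j, hj⟩ := (hc.nontrivial C hC).nonempty
    exact ⟨j, disjoint_left.mp (hc.disjoint C hC) hj, (hc.forcedClass_XApi_of_mem hC hj).symm,
      hc.nontrivial C hC⟩

end IsAdmissible

lemma XApi_inj (hfree : IsFreeAction r I) {A A' : Set I} {Ps Ps' : Set (Set I)}
    (hc : IsAdmissible r A Ps) (hc' : IsAdmissible r A' Ps')
    (h : XApi r A Ps = XApi r A' Ps') : A = A' ∧ Ps = Ps' :=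
  ⟨by rw [← hc.zeroSet_XApi hfree, h, hc'.zeroSet_XApi hfree],
    by rw [← hc.blocksOf_XApi hfree, h, hc'.blocksOf_XApi hfree]⟩

end Recovery

section Partitions

variable (r) in
def orbitSet (J : Set I) : Set (Set I) := {P | ∃ ζ : mu r, P = zdot ζ J}

lemma mem_orbitSet_self (J : Set I) : J ∈ orbitSet r J := ⟨1, (zdot_one J).symm⟩

lemma zdot_mem_orbitSet (ζ : mu r) (J : Set I) : zdot ζ J ∈ orbitSet r J := ⟨ζ, rfl⟩

lemma orbitSet_zdot (ζ : mu r) (J : Set I) : orbitSet r (zdot ζ J) = orbitSet r J := by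
  ext P
  refine ⟨fun ⟨η, h⟩ => ⟨η * ζ, by rw [h, zdot_zdot]⟩, fun ⟨η, h⟩ => ⟨η * ζ⁻¹, ?_⟩⟩
  rw [h, zdot_zdot, inv_mul_cancel_right]

lemma sUnion_orbitSet_subset {P K : Set I} (hK : IsFixedSet r K) (h : P ⊆ K) :
    ⋃₀ orbitSet r P ⊆ K := by
  rintro x ⟨_, ⟨ζ, rfl⟩, hx⟩
  rw [← hK ζ]
  exact zdot_mono h hx

lemma nontrivial_of_two_le_ncard {s : Set I} (h : 2 ≤ s.ncard) : s.Nontrivial :=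
  (one_lt_ncard_iff_nontrivial_and_finite.mp h).1

namespace IsFTPartition

variable {π : Set (Set I)}

lemma nonempty (h : IsFTPartition r I π) : ∀ P ∈ π, P.Nonempty := h.1

lemma pairwiseDisjoint (h : IsFTPartition r I π) : π.PairwiseDisjoint id := h.2.1

lemma zdot_mem (h : IsFTPartition r I π) : ∀ (ζ : mu r), ∀ P ∈ π, zdot ζ P ∈ π := h.2.2.1

lemma eq_one_of_zdot_eq (h : IsFTPartition r I π) :
    ∀ P ∈ π, ∀ ζ : mu r, zdot ζ P = P → ζ = 1 := h.2.2.2.1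

lemma exists_zdot_eq (h : IsFTPartition r I π) :
    ∀ P ∈ π, ∀ Q ∈ π, ∃ ζ : mu r, zdot ζ P = Q := h.2.2.2.2.1

lemma ncard_eq (h : IsFTPartition r I π) : π.ncard = r := h.2.2.2.2.2

lemma orbitSet_eq (h : IsFTPartition r I π) {P : Set I} (hP : P ∈ π) : orbitSet r P = π :=
  Subset.antisymm (by rintro _ ⟨ζ, rfl⟩; exact h.zdot_mem ζ P hP) fun Q hQ =>
    (h.exists_zdot_eq P hP Q hQ).imp fun _ hζ => hζ.symm

lemma isStable_sUnion (h : IsFTPartition r I π) : IsStable r I (⋃₀ π) :=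
  _root_.isStable_sUnion h.zdot_mem

lemma not_isFixedSet [Nontrivial (mu r)] (h : IsFTPartition r I π) {P : Set I} (hP : P ∈ π) :
    ¬IsFixedSet r P := fun hfix => by
  obtain ⟨ζ, hζ⟩ := exists_ne (1 : mu r)
  exact hζ (h.eq_one_of_zdot_eq P hP ζ (hfix ζ))

lemma ncard_sUnion [NeZero r] (h : IsFTPartition r I π) {P : Set I} (hP : P ∈ π) :
    (⋃₀ π).ncard = r * P.ncard := by
  have hunion : ⋃₀ π = (fun q : mu r × I => q.1 • q.2) '' (univ ×ˢ P) := by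
    ext y
    constructor
    · rintro ⟨Q, hQ, hy⟩
      obtain ⟨ζ, rfl⟩ := h.exists_zdot_eq P hP Q hQ
      obtain ⟨p, hp, rfl⟩ := hy
      exact ⟨(ζ, p), ⟨mem_univ _, hp⟩, rfl⟩
    · rintro ⟨⟨ζ, p⟩, ⟨-, hp⟩, rfl⟩
      exact ⟨zdot ζ P, h.zdot_mem ζ P hP, ⟨p, hp, rfl⟩⟩
  have hinj : InjOn (fun q : mu r × I => q.1 • q.2) (univ ×ˢ P) := by
    rintro ⟨ζ, p⟩ ⟨-, hp⟩ ⟨η, q⟩ ⟨-, hq⟩ hpq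
    have hq' : q = (η⁻¹ * ζ) • p := by simp only at hpq; rw [mul_smul, hpq, inv_smul_smul]
    have hθ : η⁻¹ * ζ = 1 := h.eq_one_of_zdot_eq P hP _
      (h.pairwiseDisjoint.elim_set (h.zdot_mem _ P hP) hP q (hq' ▸ ⟨p, hp, rfl⟩) hq)
    obtain rfl : ζ = η := (inv_mul_eq_one.mp hθ).symm
    simp_all
  rw [hunion, hinj.ncard_image, ← Nat.card_coe_set_eq,
    Nat.card_congr (Equiv.Set.prod _ _), Nat.card_prod,
    Nat.card_congr (Equiv.Set.univ _), card_mu, Nat.card_coe_set_eq]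

lemma nontrivial [NeZero r] (h : IsFTPartition r I π) (hcard : 2 * r ≤ (⋃₀ π).ncard)
    {P : Set I} (hP : P ∈ π) : P.Nontrivial := by
  rw [h.ncard_sUnion hP, mul_comm 2] at hcard
  exact nontrivial_of_two_le_ncard (le_of_mul_le_mul_left hcard (Nat.pos_of_neZero r))

lemma isAdmissible [NeZero r] (h : IsFTPartition r I π) (hcard : 2 * r ≤ (⋃₀ π).ncard) :
    IsAdmissible r ∅ π :=
  ⟨fun _ _ hx => hx.elim, fun _ hP => h.nontrivial hcard hP, h.pairwiseDisjoint, h.zdot_mem,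
    h.eq_one_of_zdot_eq, fun _ _ => disjoint_empty _⟩

end IsFTPartition

lemma isAdmissible_empty {K : Set I} (hK : IsStable r I K) : IsAdmissible r K ∅ :=
  ⟨hK, by simp, pairwiseDisjoint_empty, by simp, by simp, by simp⟩

lemma isFTPartition_orbitSet [NeZero r] {B : Set I} (hB : B.Nonempty)
    (hfreeB : ∀ ζ : mu r, zdot ζ B = B → ζ = 1)
    (hmeet : ∀ ζ : mu r, (zdot ζ B ∩ B).Nonempty → zdot ζ B = B) :
    IsFTPartition r I (orbitSet r B) := by
  have hinj : Function.Injective (fun ζ : mu r => zdot ζ B) := fun ζ η h => by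
    have := hfreeB (η⁻¹ * ζ) (by simp only at h; rw [← zdot_zdot, h, zdot_zdot, inv_mul_cancel,
      zdot_one])
    rwa [inv_mul_eq_one, eq_comm] at this
  have hrange : orbitSet r B = range (fun ζ : mu r => zdot ζ B) := by
    ext P; simp [orbitSet, eq_comm]
  refine ⟨?_, ?_, ?_, ?_, ?_, ?_⟩
  · rintro _ ⟨ζ, rfl⟩; exact zdot_nonempty.mpr hB
  · rintro _ ⟨ζ, rfl⟩ _ ⟨η, rfl⟩ hne
    refine disjoint_left.mpr fun x hxζ hxη => hne ?_
    have hmem : η⁻¹ • x ∈ zdot (η⁻¹ * ζ) B ∩ B :=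
      ⟨by rw [← zdot_zdot]; exact ⟨x, hxζ, rfl⟩, mem_zdot.mp hxη⟩
    rw [← one_mul ζ, ← mul_inv_cancel η, mul_assoc, ← zdot_zdot, hmeet _ ⟨_, hmem⟩]
  · rintro ζ _ ⟨η, rfl⟩; exact ⟨ζ * η, zdot_zdot ζ η B⟩
  · rintro _ ⟨η, rfl⟩ ζ h
    rw [zdot_zdot] at h
    simpa using hinj h
  · rintro _ ⟨ζ, rfl⟩ _ ⟨η, rfl⟩
    exact ⟨η * ζ⁻¹, by rw [zdot_zdot, mul_assoc, inv_mul_cancel, mul_one]⟩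
  · rw [hrange, ncard_range_of_injective hinj, card_mu]

end Partitions

section Subspaces

lemma XJ_anti {J K : Set I} (h : J ⊆ K) : XJ r I K ⊆ XJ r I J :=
  fun _ hz => ⟨hz.1, fun j hj => hz.2 j (h hj)⟩

lemma XJpi_mono {π π' : Set (Set I)} (h : ∀ P ∈ π', ∃ Q ∈ π, P ⊆ Q) :
    XJpi r I π ⊆ XJpi r I π' := by
  rintro z ⟨hV, hz⟩
  refine ⟨hV, fun P hP j hj j' hj' => ?_⟩
  obtain ⟨Q, hQ, hPQ⟩ := h P hP
  exact hz Q hQ j (hPQ hj) j' (hPQ hj')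

lemma XJ_subset_XJpi {K : Set I} {π : Set (Set I)} (h : ⋃₀ π ⊆ K) : XJ r I K ⊆ XJpi r I π :=
  fun _ hz => ⟨hz.1, fun P hP j hj j' hj' => by
    rw [hz.2 j (h ⟨P, hP, hj⟩), hz.2 j' (h ⟨P, hP, hj'⟩)]⟩

lemma XJpi_orbitSet_anti {P Q : Set I} (h : P ⊆ Q) :
    XJpi r I (orbitSet r Q) ⊆ XJpi r I (orbitSet r P) :=
  XJpi_mono fun _ ⟨ζ, hζ⟩ => ⟨zdot ζ Q, zdot_mem_orbitSet ζ Q, hζ ▸ zdot_mono h⟩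

lemma XJ_inter_XJ (K K' : Set I) : XJ r I K ∩ XJ r I K' = XJ r I (K ∪ K') := by
  ext z
  simp only [XJ, mem_inter_iff, mem_sep_iff, mem_union, or_imp, forall_and]
  tauto

lemma XJpi_inter_XJpi (π π' : Set (Set I)) :
    XJpi r I π ∩ XJpi r I π' = XJpi r I (π ∪ π') := by
  ext z
  simp only [XJpi, mem_inter_iff, mem_sep_iff, mem_union, or_imp, forall_and]
  tauto

/-- Equivariance spreads the vanishing on the block that meets `K` to all of `⋃₀ π`. -/
lemma XJ_inter_XJpi_of_meet {K : Set I} {π : Set (Set I)} (hπ : IsFTPartition r I π)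
    {P : Set I} (hP : P ∈ π) (hmeet : (P ∩ K).Nonempty) :
    XJ r I K ∩ XJpi r I π = XJ r I (K ∪ ⋃₀ π) := by
  obtain ⟨x₀, hx₀P, hx₀K⟩ := hmeet
  refine Subset.antisymm ?_ fun z hz =>
    ⟨XJ_anti subset_union_left hz, XJ_subset_XJpi subset_union_right hz⟩
  rintro z ⟨⟨hV, hK⟩, -, hπz⟩
  refine ⟨hV, ?_⟩
  rintro j (hj | ⟨Q, hQ, hj⟩)
  · exact hK j hj
  · obtain ⟨ζ, rfl⟩ := hπ.exists_zdot_eq P hP Q hQ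
    obtain ⟨p, hp, rfl⟩ := hj
    rw [hV ζ p, hπz P hP p hp x₀ hx₀P, hK x₀ hx₀K, mul_zero]

lemma zeroSet_XJ (hfree : IsFreeAction r I) {K : Set I} (hK : IsStable r I K) :
    zeroSet (XJ r I K) = K := by
  rw [XJ_eq_XApi, (isAdmissible_empty hK).zeroSet_XApi hfree]

lemma zeroSet_XJpi [NeZero r] (hfree : IsFreeAction r I) {π : Set (Set I)}
    (hπ : IsFTPartition r I π) (hcard : 2 * r ≤ (⋃₀ π).ncard) : zeroSet (XJpi r I π) = ∅ := by
  rw [XJpi_eq_XApi, (hπ.isAdmissible hcard).zeroSet_XApi hfree]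

lemma XJpi_not_subset_XJ [NeZero r] (hfree : IsFreeAction r I) {K : Set I} (hK : K.Nonempty)
    {π : Set (Set I)} (hπ : IsFTPartition r I π) (hcard : 2 * r ≤ (⋃₀ π).ncard) :
    ¬XJpi r I π ⊆ XJ r I K := fun h => by
  have hK' : K ⊆ zeroSet (XJpi r I π) := fun k hk z hz => (h hz).2 k hk
  rw [zeroSet_XJpi hfree hπ hcard] at hK'
  exact hK.ne_empty (subset_empty_iff.mp hK')

lemma XJ_ne_XJpi [NeZero r] (hfree : IsFreeAction r I) {K : Set I} (hK : K.Nonempty)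
    {π : Set (Set I)} (hπ : IsFTPartition r I π) (hcard : 2 * r ≤ (⋃₀ π).ncard) :
    XJ r I K ≠ XJpi r I π := fun h => XJpi_not_subset_XJ hfree hK hπ hcard h.ge

lemma sUnion_subset_of_XJ_subset_XJpi (hfree : IsFreeAction r I) {K : Set I}
    (hK : IsStable r I K) {π : Set (Set I)} (hπ : ∀ P ∈ π, P.Nontrivial)
    (h : XJ r I K ⊆ XJpi r I π) : ⋃₀ π ⊆ K := by
  rintro x ⟨P, hP, hx⟩
  by_contra hxK
  have hPx := subset_forcedClass (h.trans (XJpi_eq_XApi π).subset) hP hx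
  rw [XJ_eq_XApi, (isAdmissible_empty hK).forcedClass_XApi_of_forall_not_mem hfree hxK
    (by simp)] at hPx
  exact (hπ P hP).not_subset_singleton hPx

lemma exists_subset_of_XJpi_subset_XJpi (hfree : IsFreeAction r I) {π π' : Set (Set I)}
    (hπ : IsAdmissible r ∅ π) (hπ' : ∀ P ∈ π', P.Nontrivial) (h : XJpi r I π ⊆ XJpi r I π')
    {P' : Set I} (hP' : P' ∈ π') : ∃ P ∈ π, P' ⊆ P := by
  obtain ⟨j, hj⟩ := (hπ' P' hP').nonempty
  have hP'j := subset_forcedClass (h.trans (XJpi_eq_XApi π').subset) hP' hj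
  rw [XJpi_eq_XApi] at hP'j
  by_cases hjπ : ∃ P ∈ π, j ∈ P
  · obtain ⟨P, hP, hjP⟩ := hjπ
    exact ⟨P, hP, hπ.forcedClass_XApi_of_mem hP hjP ▸ hP'j⟩
  · simp only [not_exists, not_and] at hjπ
    rw [hπ.forcedClass_XApi_of_forall_not_mem hfree (notMem_empty j) hjπ] at hP'j
    exact absurd hP'j (hπ' P' hP').not_subset_singleton

lemma subset_of_XJpi_subset_XJpi (hfree : IsFreeAction r I) {π π' : Set (Set I)}
    (hπ : IsAdmissible r ∅ π) (hπ' : ∀ P ∈ π', P.Nontrivial) (h : XJpi r I π ⊆ XJpi r I π')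
    {P P' : Set I} (hP : P ∈ π) (hP' : P' ∈ π') {x : I} (hx : x ∈ P) (hx' : x ∈ P') :
    P' ⊆ P := by
  obtain ⟨Q, hQ, hP'Q⟩ := exists_subset_of_XJpi_subset_XJpi hfree hπ hπ' h hP'
  rwa [← hπ.pairwiseDisjoint.elim_set hQ hP x (hP'Q hx') hx]

lemma subset_of_XJ_subset_XJ (hfree : IsFreeAction r I) {J K : Set I} (hJ : IsStable r I J)
    (hK : IsStable r I K) (h : XJ r I J ⊆ XJ r I K) : K ⊆ J := by
  simpa only [zeroSet_XJ hfree hJ, zeroSet_XJ hfree hK] using zeroSet_anti h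

lemma XJ_inj (hfree : IsFreeAction r I) {J K : Set I} (hJ : IsStable r I J)
    (hK : IsStable r I K) (h : XJ r I J = XJ r I K) : J = K :=
  (subset_of_XJ_subset_XJ hfree hK hJ h.ge).antisymm (subset_of_XJ_subset_XJ hfree hJ hK h.le)

lemma XJpi_inj [NeZero r] (hfree : IsFreeAction r I) {π π' : Set (Set I)}
    (hπ : IsFTPartition r I π) (hcard : 2 * r ≤ (⋃₀ π).ncard) (hπ' : IsFTPartition r I π')
    (hcard' : 2 * r ≤ (⋃₀ π').ncard) (h : XJpi r I π = XJpi r I π') : π = π' := by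
  rw [XJpi_eq_XApi, XJpi_eq_XApi] at h
  exact (XApi_inj hfree (hπ.isAdmissible hcard) (hπ'.isAdmissible hcard') h).2

end Subspaces

section Hierarchies

variable {α : Type} {F : Set (Set α)} {C C' J K : Set α}

lemma isLaminar_of_subset_or_subset
    (h : ∀ J ∈ F, ∀ K ∈ F, (J ∩ K).Nonempty → J ⊆ K ∨ K ⊆ J) : IsLaminar F := fun J hJ K hK => by
  by_cases hd : Disjoint J K
  · exact Or.inr (Or.inr hd)
  · exact (h J hJ K hK (not_disjoint_iff_nonempty_inter.mp hd)).elim Or.inl (Or.inr ∘ Or.inl)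

lemma IsLaminar.subset_or_subset (hF : IsLaminar F) (hJ : J ∈ F) (hK : K ∈ F)
    (h : (J ∩ K).Nonempty) : J ⊆ K ∨ K ⊆ J :=
  (hF J hJ K hK).imp_right fun h' =>
    h'.resolve_right (not_disjoint_iff_nonempty_inter.mpr h)

lemma IsLaminar.disjoint_of_isChild (hF : IsLaminar F) (hC : IsChild F C K)
    (hC' : IsChild F C' K) (hne : C ≠ C') : Disjoint C C' := by
  refine not_not.mp fun hd => hne ?_
  rcases hF.subset_or_subset hC.1 hC'.1 (not_disjoint_iff_nonempty_inter.mp hd) with h | h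
  · exact (hC.2.2 C' hC'.1 hC'.2.1 h).symm
  · exact hC'.2.2 C hC.1 hC.2.1 h

lemma exists_isChild_superset [Finite α] (hJ : J ∈ F) (hJK : J ⊂ K) :
    ∃ C, IsChild F C K ∧ J ⊆ C := by
  obtain ⟨C, hJC, hC⟩ := (toFinite {L | L ∈ F ∧ J ⊆ L ∧ L ⊂ K}).exists_le_maximal
    ⟨hJ, subset_rfl, hJK⟩
  exact ⟨C, ⟨hC.1.1, hC.1.2.2, fun L hL hLK hCL =>
    (hC.2 ⟨hL, hJC.trans hCL, hLK⟩ hCL).antisymm hCL⟩, hJC⟩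

/-- A member `J ⊂ K` misses some `i ∈ K`, and `{i}` is a second vertex below `K`. -/
lemma isHierarchyOn_univ_of_isLaminar (hne : ∀ J ∈ F, J.Nonempty)
    (hsingleton : ∀ i, ({i} : Set α) ∈ F) (huniv : univ ∈ F) (hF : IsLaminar F) :
    IsHierarchyOn univ F := by
  refine ⟨fun J hJ => ⟨hne J hJ, subset_univ J⟩, fun i _ => hsingleton i, huniv, hF,
    fun K _ J hJ hJK hbelow => ?_⟩
  obtain ⟨i, hiK, hiJ⟩ := exists_of_ssubset hJK
  obtain ⟨x, hx⟩ := hne J hJ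
  have hiK' : ({i} : Set α) ⊂ K := ssubset_of_subset_of_ne (singleton_subset_iff.mpr hiK)
    fun h => hiJ (by have hxi := hJK.1 hx; rw [← h, mem_singleton_iff] at hxi; exact hxi ▸ hx)
  exact hiJ (hbelow {i} (hsingleton i) hiK' rfl)

end Hierarchies

namespace IsTrHierarchyOn

variable {F : Set (Set I)} (hF : IsTrHierarchyOn r (univ : Set I) F)
include hF

lemma isLaminar : IsLaminar F := hF.1.2.2.2.1

lemma nonempty_of_mem {J : Set I} (hJ : J ∈ F) : J.Nonempty := (hF.1.1 J hJ).1

lemma univ_mem : (univ : Set I) ∈ F := hF.1.2.2.1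

lemma singleton_mem (i : I) : ({i} : Set I) ∈ F := hF.1.2.1 i (mem_univ i)

lemma zdot_mem (ζ : mu r) {J : Set I} (hJ : J ∈ F) : zdot ζ J ∈ F := hF.2.1 ζ J hJ

lemma zdot_eq_of_meet [Finite I] {J : Set I} (hJ : J ∈ F) {ζ : mu r}
    (h : (zdot ζ J ∩ J).Nonempty) : zdot ζ J = J := by
  rcases hF.isLaminar.subset_or_subset (hF.zdot_mem ζ hJ) hJ h with h' | h'
  · exact eq_of_subset_of_ncard_le h' (ncard_zdot ζ J).ge
  · exact (eq_of_subset_of_ncard_le h' (ncard_zdot ζ J).le).symm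

lemma isFixedSet_of_subset [Finite I] {K J : Set I} (hK : IsFixedSet r K) (hKne : K.Nonempty)
    (hKJ : K ⊆ J) (hJ : J ∈ F) : IsFixedSet r J := fun ζ => by
  obtain ⟨x, hx⟩ := hKne
  refine hF.zdot_eq_of_meet hJ ⟨x, zdot_mono hKJ ?_, hKJ hx⟩
  rwa [hK ζ]

/-- A non-fixed member lies below a child `C` of the smallest fixed member containing it; a
`ζ` fixing the member also fixes `C`, and `C` is not fixed by minimality, so condition (3) of
`T(r,I)` forces `ζ = 1`. -/
lemma eq_one_of_zdot_eq [Finite I] {J : Set I} (hJ : J ∈ F) (hnf : ¬IsFixedSet r J) {ζ : mu r}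
    (hζ : zdot ζ J = J) : ζ = 1 := by
  obtain ⟨K, ⟨hKF, hKfix, hJK⟩, hmin⟩ :=
    (toFinite {L | L ∈ F ∧ IsFixedSet r L ∧ J ⊆ L}).exists_minimal
      ⟨univ, hF.univ_mem, isFixedSet_univ, subset_univ J⟩
  obtain ⟨C, hC, hJC⟩ := exists_isChild_superset hJ
    (ssubset_of_subset_of_ne hJK fun h => hnf (h ▸ hKfix))
  have hCfix : ¬IsFixedSet r C := fun hCfix => hC.2.1.2 (hmin ⟨hC.1, hCfix, hJC⟩ hC.2.1.1)
  obtain ⟨x, hx⟩ := hF.nonempty_of_mem hJ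
  refine hF.2.2.2 K hKF hKfix C hC hCfix ζ (hF.zdot_eq_of_meet hC.1 ⟨x, zdot_mono hJC ?_, hJC hx⟩)
  rwa [hζ]

/-- Two disjoint fixed members would both lie below fixed children of the smallest member
containing both, and condition (2) of `T(r,I)` makes these children equal. -/
lemma subset_or_subset_of_isFixedSet [Finite I] {K K' : Set I} (hK : K ∈ F) (hK' : K' ∈ F)
    (hKfix : IsFixedSet r K) (hK'fix : IsFixedSet r K') : K ⊆ K' ∨ K' ⊆ K := by
  by_cases hmeet : (K ∩ K').Nonempty
  · exact hF.isLaminar.subset_or_subset hK hK' hmeet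
  exfalso
  obtain ⟨M, ⟨hMF, hKM⟩, hmin⟩ := (toFinite {L | L ∈ F ∧ K ∪ K' ⊆ L}).exists_minimal
    ⟨univ, hF.univ_mem, subset_univ _⟩
  obtain ⟨hKM, hK'M⟩ := union_subset_iff.mp hKM
  have hdisj := not_nonempty_iff_eq_empty.mp hmeet
  have hKne := hF.nonempty_of_mem hK
  have hK'ne := hF.nonempty_of_mem hK'
  obtain ⟨C, hC, hKC⟩ := exists_isChild_superset hK (ssubset_of_subset_of_ne hKM fun h => by
    obtain ⟨x, hx⟩ := hK'ne
    exact hdisj.subset ⟨h ▸ hK'M hx, hx⟩)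
  obtain ⟨C', hC', hK'C'⟩ := exists_isChild_superset hK' (ssubset_of_subset_of_ne hK'M fun h => by
    obtain ⟨x, hx⟩ := hKne
    exact hdisj.subset ⟨hx, h ▸ hKM hx⟩)
  have hCC' : C = C' := hF.2.2.1 M hMF (hF.isFixedSet_of_subset hKfix hKne hKM hMF) C C' hC hC'
    (hF.isFixedSet_of_subset hKfix hKne hKC hC.1) (hF.isFixedSet_of_subset hK'fix hK'ne hK'C' hC'.1)
  exact hC.2.1.2 (hmin ⟨hC.1, union_subset hKC (hCC' ▸ hK'C')⟩ hC.2.1.1)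

lemma isFTPartition_orbitSet [NeZero r] [Finite I] {J : Set I} (hJ : J ∈ F)
    (hnf : ¬IsFixedSet r J) : IsFTPartition r I (orbitSet r J) :=
  _root_.isFTPartition_orbitSet (hF.nonempty_of_mem hJ) (fun _ h => hF.eq_one_of_zdot_eq hJ hnf h)
    (fun _ h => hF.zdot_eq_of_meet hJ h)

lemma two_mul_le_ncard_sUnion_orbitSet [NeZero r] [Finite I] {J : Set I} (hJ : J ∈ F)
    (hnf : ¬IsFixedSet r J) (h2 : 2 ≤ J.ncard) : 2 * r ≤ (⋃₀ orbitSet r J).ncard := by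
  rw [(hF.isFTPartition_orbitSet hJ hnf).ncard_sUnion (mem_orbitSet_self J), mul_comm]
  exact Nat.mul_le_mul_left r h2

end IsTrHierarchyOn

section Saturation

open Relation

def SameBlock (Qs : Set (Set I)) (a b : I) : Prop := ∃ Q ∈ Qs, a ∈ Q ∧ b ∈ Q

variable {Qs : Set (Set I)}

lemma eqvGen_sameBlock_smul (hQs : ∀ (ζ : mu r), ∀ Q ∈ Qs, zdot ζ Q ∈ Qs) (ζ : mu r) {a b : I}
    (h : EqvGen (SameBlock Qs) a b) : EqvGen (SameBlock Qs) (ζ • a) (ζ • b) := by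
  induction h with
  | rel x y hxy =>
    obtain ⟨Q, hQ, hx, hy⟩ := hxy
    exact .rel _ _ ⟨zdot ζ Q, hQs ζ Q hQ, ⟨x, hx, rfl⟩, ⟨y, hy, rfl⟩⟩
  | refl => exact .refl _
  | symm _ _ _ ih => exact .symm _ _ ih
  | trans _ _ _ _ _ ih₁ ih₂ => exact .trans _ _ _ ih₁ ih₂

lemma eq_of_eqvGen_sameBlock {z : I → ℂ} (hz : ∀ Q ∈ Qs, ∀ j ∈ Q, ∀ j' ∈ Q, z j = z j')
    {a b : I} (h : EqvGen (SameBlock Qs) a b) : z a = z b :=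
  (Equivalence.eqvGen_iff (r := fun a b => z a = z b) ⟨fun _ => rfl, Eq.symm, Eq.trans⟩).mp
    (EqvGen.mono (fun a b (hab : SameBlock Qs a b) =>
      let ⟨Q, hQ, ha, hb⟩ := hab; hz Q hQ a ha b hb) a b h)

def sameBlockClass (Qs : Set (Set I)) (x₀ : I) : Set I := {c | EqvGen (SameBlock Qs) x₀ c}

lemma mem_zdot_sameBlockClass (hQs : ∀ (ζ : mu r), ∀ Q ∈ Qs, zdot ζ Q ∈ Qs) {ζ : mu r}
    {x₀ c : I} : c ∈ zdot ζ (sameBlockClass Qs x₀) ↔ EqvGen (SameBlock Qs) (ζ • x₀) c :=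
  ⟨fun h => by simpa using eqvGen_sameBlock_smul hQs ζ (mem_zdot.mp h), fun h => mem_zdot.mpr
    (by simpa using eqvGen_sameBlock_smul hQs ζ⁻¹ h : EqvGen (SameBlock Qs) x₀ (ζ⁻¹ • c))⟩

section Cover

variable {x₀ : I} (hcover : ∀ Q ∈ Qs, ∃ ζ : mu r, Q ⊆ zdot ζ (sameBlockClass Qs x₀))
include hcover

lemma XJpi_eq_XJpi_orbitSet_sameBlockClass (hQs : ∀ (ζ : mu r), ∀ Q ∈ Qs, zdot ζ Q ∈ Qs) :
    XJpi r I Qs = XJpi r I (orbitSet r (sameBlockClass Qs x₀)) := by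
  refine Subset.antisymm (fun z ⟨hV, hz⟩ => ⟨hV, ?_⟩) (XJpi_mono fun Q hQ =>
    let ⟨ζ, hζ⟩ := hcover Q hQ; ⟨_, zdot_mem_orbitSet ζ _, hζ⟩)
  rintro _ ⟨ζ, rfl⟩ j hj j' hj'
  exact eq_of_eqvGen_sameBlock hz (.trans _ _ _ (.symm _ _ ((mem_zdot_sameBlockClass hQs).mp hj))
    ((mem_zdot_sameBlockClass hQs).mp hj'))

/-- Every `z ∈ X_Qs` has `z x₀ = z (ζ • x₀) = ζ * z x₀`, so `z x₀ = 0`, and then `z` vanishes on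
the translates of the class of `x₀`. -/
lemma XJpi_eq_XJ_sUnion {ζ : mu r} (hζ : ζ ≠ 1) (hx₀ : EqvGen (SameBlock Qs) x₀ (ζ • x₀)) :
    XJpi r I Qs = XJ r I (⋃₀ Qs) := by
  refine Subset.antisymm (fun z ⟨hV, hz⟩ => ⟨hV, ?_⟩) (XJ_subset_XJpi subset_rfl)
  have hzx₀ : z x₀ = 0 := by
    have h := eq_of_eqvGen_sameBlock hz hx₀
    rw [hV] at h
    by_contra h0
    refine hζ (mu_coe_injective ?_)
    simpa using mul_right_cancel₀ h0 ((one_mul (z x₀)).trans h).symm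
  rintro u ⟨Q, hQ, hu⟩
  obtain ⟨τ, hτ⟩ := hcover Q hQ
  obtain ⟨c, hc, rfl⟩ := hτ hu
  rw [hV, ← eq_of_eqvGen_sameBlock hz hc, hzx₀, mul_zero]

end Cover

lemma isFTPartition_orbitSet_sameBlockClass [NeZero r]
    (hQs : ∀ (ζ : mu r), ∀ Q ∈ Qs, zdot ζ Q ∈ Qs) {x₀ : I}
    (hx₀ : ∀ ζ : mu r, EqvGen (SameBlock Qs) x₀ (ζ • x₀) → ζ = 1) :
    IsFTPartition r I (orbitSet r (sameBlockClass Qs x₀)) := by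
  refine isFTPartition_orbitSet ⟨x₀, EqvGen.refl _⟩ (fun ζ h => hx₀ ζ ?_)
    fun ζ ⟨u, hu, hu'⟩ => ?_
  · have hζx₀ : ζ • x₀ ∈ zdot ζ (sameBlockClass Qs x₀) := smul_mem_zdot.mpr (EqvGen.refl x₀)
    rwa [h] at hζx₀
  · rw [hx₀ ζ (.trans _ _ _ hu' (.symm _ _ ((mem_zdot_sameBlockClass hQs).mp hu))), zdot_one]

lemma XJpi_mem_Fcal_of_forall_subset_zdot [NeZero r] [Finite I]
    (hQs : ∀ (ζ : mu r), ∀ Q ∈ Qs, zdot ζ Q ∈ Qs) {x₀ : I}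
    (hcover : ∀ Q ∈ Qs, ∃ ζ : mu r, Q ⊆ zdot ζ (sameBlockClass Qs x₀))
    (hcard : 2 * r ≤ (⋃₀ Qs).ncard) : XJpi r I Qs ∈ Fcal r I := by
  by_cases hdbl : ∃ ζ : mu r, ζ ≠ 1 ∧ EqvGen (SameBlock Qs) x₀ (ζ • x₀)
  · obtain ⟨ζ, hζ, hx₀⟩ := hdbl
    rw [XJpi_eq_XJ_sUnion hcover hζ hx₀]
    exact Or.inl ⟨_, nonempty_of_ncard_ne_zero (by have := NeZero.ne r; omega),
      isStable_sUnion hQs, rfl⟩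
  · simp only [not_exists, not_and, not_imp_not] at hdbl
    rw [XJpi_eq_XJpi_orbitSet_sameBlockClass hcover hQs]
    refine Or.inr ⟨_, isFTPartition_orbitSet_sameBlockClass hQs hdbl, hcard.trans
      (ncard_le_ncard fun u ⟨Q, hQ, hu⟩ => ?_), rfl⟩
    obtain ⟨ζ, hζ⟩ := hcover Q hQ
    exact ⟨_, zdot_mem_orbitSet ζ _, hζ hu⟩

lemma XJpi_inter_XJpi_mem_Fcal [NeZero r] [Finite I] {π π' : Set (Set I)}
    (hπ : IsFTPartition r I π) (hπ' : IsFTPartition r I π')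
    (hcard : 2 * r ≤ (⋃₀ π).ncard) {P P' : Set I} (hP : P ∈ π) (hP' : P' ∈ π') {x₀ : I}
    (hx₀ : x₀ ∈ P ∩ P') : XJpi r I π ∩ XJpi r I π' ∈ Fcal r I := by
  have hcover : ∀ {R : Set I} {ρ : Set (Set I)}, IsFTPartition r I ρ → R ∈ ρ → x₀ ∈ R →
      R ∈ π ∪ π' → ∀ Q ∈ ρ, ∃ ζ : mu r, Q ⊆ zdot ζ (sameBlockClass (π ∪ π') x₀) :=
    fun hρ hR hx₀R hRπ Q hQ => (hρ.exists_zdot_eq _ hR Q hQ).imp fun _ hζ => by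
      rw [← hζ]; exact zdot_mono fun c hc => .rel _ _ ⟨_, hRπ, hx₀R, hc⟩
  rw [XJpi_inter_XJpi]
  refine XJpi_mem_Fcal_of_forall_subset_zdot (x₀ := x₀) ?_ ?_
    (hcard.trans (ncard_le_ncard (sUnion_mono subset_union_left)))
  · rintro ζ Q (hQ | hQ)
    exacts [Or.inl (hπ.zdot_mem ζ Q hQ), Or.inr (hπ'.zdot_mem ζ Q hQ)]
  · rintro Q (hQ | hQ)
    exacts [hcover hπ hP hx₀.1 (Or.inl hP) Q hQ, hcover hπ' hP' hx₀.2 (Or.inr hP') Q hQ]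

end Saturation

namespace IsNested

variable {S : Set (Set (I → ℂ))}

lemma subset_or_subset (hS : IsNested r I S) {X Y : Set (I → ℂ)} (hX : X ∈ S) (hY : Y ∈ S)
    (h : X ∩ Y ∈ Fcal r I) : X ⊆ Y ∨ Y ⊆ X := by
  by_contra! hXY
  have hne : X ≠ Y := fun h' => hXY.1 h'.subset
  refine hS.2 {X, Y} ?_ (Finset.card_pair hne).ge ?_ (by simpa using h)
  · simp [insert_subset_iff, hX, hY]
  · simp only [Finset.mem_insert, Finset.mem_singleton]
    rintro _ (rfl | rfl) _ (rfl | rfl) h' <;> tauto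

lemma subset_or_subset_of_XJ (hS : IsNested r I S) (hfree : IsFreeAction r I) {K K' : Set I}
    (hK : IsStable r I K) (hKne : K.Nonempty) (hK' : IsStable r I K') (hX : XJ r I K ∈ S)
    (hX' : XJ r I K' ∈ S) : K ⊆ K' ∨ K' ⊆ K := by
  have hinter : XJ r I K ∩ XJ r I K' ∈ Fcal r I := by
    rw [XJ_inter_XJ]; exact Or.inl ⟨_, hKne.mono subset_union_left, hK.union hK', rfl⟩
  exact (hS.subset_or_subset hX hX' hinter).symm.imp (subset_of_XJ_subset_XJ hfree hK' hK)
    (subset_of_XJ_subset_XJ hfree hK hK')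

lemma subset_of_XJ_of_XJpi [NeZero r] (hS : IsNested r I S) (hfree : IsFreeAction r I)
    {K : Set I} (hK : IsStable r I K) (hKne : K.Nonempty) {π : Set (Set I)}
    (hπ : IsFTPartition r I π) (hcard : 2 * r ≤ (⋃₀ π).ncard) (hX : XJ r I K ∈ S)
    (hXπ : XJpi r I π ∈ S) {P : Set I} (hP : P ∈ π) (hmeet : (P ∩ K).Nonempty) : P ⊆ K := by
  have hinter : XJ r I K ∩ XJpi r I π ∈ Fcal r I := by
    rw [XJ_inter_XJpi_of_meet hπ hP hmeet]
    exact Or.inl ⟨_, hKne.mono subset_union_left, hK.union hπ.isStable_sUnion, rfl⟩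
  rcases hS.subset_or_subset hX hXπ hinter with h | h
  · exact (subset_sUnion_of_mem hP).trans
      (sUnion_subset_of_XJ_subset_XJpi hfree hK (fun _ => hπ.nontrivial hcard) h)
  · exact absurd h (XJpi_not_subset_XJ hfree hKne hπ hcard)

lemma subset_or_subset_of_XJpi [NeZero r] [Finite I] (hS : IsNested r I S)
    (hfree : IsFreeAction r I) {π π' : Set (Set I)} (hπ : IsFTPartition r I π)
    (hπ' : IsFTPartition r I π') (hcard : 2 * r ≤ (⋃₀ π).ncard)
    (hcard' : 2 * r ≤ (⋃₀ π').ncard) (hX : XJpi r I π ∈ S) (hX' : XJpi r I π' ∈ S)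
    {P P' : Set I} (hP : P ∈ π) (hP' : P' ∈ π') (hmeet : (P ∩ P').Nonempty) :
    P ⊆ P' ∨ P' ⊆ P := by
  obtain ⟨x₀, hx₀⟩ := hmeet
  rcases hS.subset_or_subset hX hX' (XJpi_inter_XJpi_mem_Fcal hπ hπ' hcard hP hP' hx₀) with h | h
  · exact Or.inr (subset_of_XJpi_subset_XJpi hfree (hπ.isAdmissible hcard)
      (fun _ => hπ'.nontrivial hcard') h hP hP' hx₀.1 hx₀.2)
  · exact Or.inl (subset_of_XJpi_subset_XJpi hfree (hπ'.isAdmissible hcard')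
      (fun _ => hπ.nontrivial hcard) h hP' hP hx₀.2 hx₀.1)

end IsNested

section NestedToTree

variable (r) in
def treeOfNested (S : Set (Set (I → ℂ))) : Set (Set I) :=
  {J | J = univ ∨ (∃ i, J = {i}) ∨ (IsStable r I J ∧ J.Nonempty ∧ XJ r I J ∈ S) ∨
    ∃ π, IsFTPartition r I π ∧ 2 * r ≤ (⋃₀ π).ncard ∧ XJpi r I π ∈ S ∧ J ∈ π}

variable {S : Set (Set (I → ℂ))}

lemma nonempty_of_mem_treeOfNested [Nonempty I] {J : Set I} (hJ : J ∈ treeOfNested r S) :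
    J.Nonempty := by
  rcases hJ with rfl | ⟨i, rfl⟩ | ⟨-, hne, -⟩ | ⟨π, hπ, -, -, hJπ⟩
  exacts [univ_nonempty, singleton_nonempty i, hne, hπ.nonempty J hJπ]

lemma isLaminar_treeOfNested [NeZero r] [Finite I] (hS : IsNested r I S)
    (hfree : IsFreeAction r I) : IsLaminar (treeOfNested r S) := by
  refine isLaminar_of_subset_or_subset fun J hJ K hK hJK => ?_
  rcases hJ with rfl | ⟨i, rfl⟩ | ⟨hJst, hJne, hXJ⟩ | ⟨π, hπ, hcard, hXπ, hJπ⟩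
  · exact Or.inr (subset_univ K)
  · exact Or.inl (singleton_subset_iff.mpr (singleton_inter_nonempty.mp hJK))
  all_goals rcases hK with rfl | ⟨i, rfl⟩ | ⟨hKst, hKne, hXK⟩ | ⟨π', hπ', hcard', hXπ', hKπ'⟩
  · exact Or.inl (subset_univ J)
  · exact Or.inr (singleton_subset_iff.mpr (inter_singleton_nonempty.mp hJK))
  · exact hS.subset_or_subset_of_XJ hfree hJst hJne hKst hXJ hXK
  · exact Or.inr (hS.subset_of_XJ_of_XJpi hfree hJst hJne hπ' hcard' hXJ hXπ' hKπ'
      (inter_comm J K ▸ hJK))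
  · exact Or.inl (subset_univ J)
  · exact Or.inr (singleton_subset_iff.mpr (inter_singleton_nonempty.mp hJK))
  · exact Or.inl (hS.subset_of_XJ_of_XJpi hfree hKst hKne hπ hcard hXK hXπ hJπ hJK)
  · exact hS.subset_or_subset_of_XJpi hfree hπ hπ' hcard hcard' hXπ hXπ' hJπ hKπ' hJK

lemma eq_univ_or_of_isFixedSet_of_mem_treeOfNested [Nontrivial (mu r)]
    (hfree : IsFreeAction r I) {J : Set I} (hJ : J ∈ treeOfNested r S) (hfix : IsFixedSet r J) :
    J = univ ∨ (IsStable r I J ∧ J.Nonempty ∧ XJ r I J ∈ S) := by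
  rcases hJ with rfl | ⟨i, rfl⟩ | hJ | ⟨π, hπ, -, -, hJπ⟩
  · exact Or.inl rfl
  · exact absurd hfix (not_isFixedSet_singleton hfree i)
  · exact Or.inr hJ
  · exact absurd hfix (hπ.not_isFixedSet hJπ)

lemma isTrHierarchyOn_treeOfNested [NeZero r] [Nontrivial (mu r)] [Finite I] [Nonempty I]
    (hS : IsNested r I S) (hfree : IsFreeAction r I) :
    IsTrHierarchyOn r univ (treeOfNested r S) := by
  have hlam := isLaminar_treeOfNested hS hfree
  refine ⟨isHierarchyOn_univ_of_isLaminar (fun _ => nonempty_of_mem_treeOfNested)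
    (fun i => Or.inr (Or.inl ⟨i, rfl⟩)) (Or.inl rfl) hlam, ?_, ?_, ?_⟩
  · rintro ζ J (rfl | ⟨i, rfl⟩ | ⟨hst, hne, hXS⟩ | ⟨π, hπ, hcard, hXπ, hJπ⟩)
    · exact Or.inl (isFixedSet_univ ζ)
    · exact Or.inr (Or.inl ⟨ζ • i, zdot_singleton ζ i⟩)
    · rw [isStable_iff_isFixedSet.mp hst ζ]; exact Or.inr (Or.inr (Or.inl ⟨hst, hne, hXS⟩))
    · exact Or.inr (Or.inr (Or.inr ⟨π, hπ, hcard, hXπ, hπ.zdot_mem ζ J hJπ⟩))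
  · intro K _ _ C C' hC hC' hCfix hC'fix
    have hproper : ∀ {D}, IsChild (treeOfNested r S) D K → D ≠ univ :=
      fun hD h => hD.2.1.2 (h ▸ subset_univ K)
    obtain ⟨hCst, hCne, hXC⟩ :=
      (eq_univ_or_of_isFixedSet_of_mem_treeOfNested hfree hC.1 hCfix).resolve_left (hproper hC)
    obtain ⟨hC'st, ⟨y, hy⟩, hXC'⟩ :=
      (eq_univ_or_of_isFixedSet_of_mem_treeOfNested hfree hC'.1 hC'fix).resolve_left (hproper hC')
    by_contra hne
    have hdisj := hlam.disjoint_of_isChild hC hC' hne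
    obtain ⟨x, hx⟩ := hCne
    rcases hS.subset_or_subset_of_XJ hfree hCst ⟨x, hx⟩ hC'st hXC hXC' with h | h
    · exact disjoint_left.mp hdisj hx (h hx)
    · exact disjoint_right.mp hdisj hy (h hy)
  · rintro K - - C hC hCnfix ζ hζ
    rcases hC.1 with rfl | ⟨i, rfl⟩ | ⟨hst, -, -⟩ | ⟨π, hπ, -, -, hCπ⟩
    · exact absurd isFixedSet_univ hCnfix
    · rw [zdot_singleton, singleton_eq_singleton_iff] at hζ
      exact hfree ζ i hζ
    · exact absurd (isStable_iff_isFixedSet.mp hst) hCnfix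
    · exact hπ.eq_one_of_zdot_eq C hCπ ζ hζ

lemma nestedOfTree_treeOfNested [NeZero r] [Nontrivial (mu r)] [Finite I]
    (hfree : IsFreeAction r I) (hS : IsNested r I S) :
    nestedOfTree r I (treeOfNested r S) = S := by
  refine Subset.antisymm ?_ fun X hX => ?_
  · rintro X (⟨J, hJ, -, hfix, hJu, rfl⟩ | ⟨J, hJ, h2, hnf, rfl⟩)
    · exact ((eq_univ_or_of_isFixedSet_of_mem_treeOfNested hfree hJ hfix).resolve_left hJu).2.2
    · rcases hJ with rfl | ⟨i, rfl⟩ | ⟨hst, -, -⟩ | ⟨π, hπ, -, hXπ, hJπ⟩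
      · exact absurd isFixedSet_univ hnf
      · simp at h2
      · exact absurd (isStable_iff_isFixedSet.mp hst) hnf
      · show XJpi r I (orbitSet r J) ∈ S
        rwa [hπ.orbitSet_eq hJπ]
  · obtain ⟨hXF, hXu⟩ := hS.1 hX
    rcases hXF with ⟨K, hne, hst, rfl⟩ | ⟨π, hπ, hcard, rfl⟩
    · exact Or.inl ⟨K, Or.inr (Or.inr (Or.inl ⟨hst, hne, hX⟩)),
        two_le_ncard_of_isStable hfree hst hne, isStable_iff_isFixedSet.mp hst,
        fun h => hXu (h ▸ rfl), rfl⟩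
    · obtain ⟨P, hP⟩ : π.Nonempty := nonempty_of_ncard_ne_zero (hπ.ncard_eq ▸ NeZero.ne r)
      exact Or.inr ⟨P, Or.inr (Or.inr (Or.inr ⟨π, hπ, hcard, hX, hP⟩)),
        one_lt_ncard_iff_nontrivial.mpr (hπ.nontrivial hcard hP), hπ.not_isFixedSet hP,
        (congrArg (XJpi r I) (hπ.orbitSet_eq hP)).symm⟩

end NestedToTree

section TreeToNested

variable {F : Set (Set I)}

lemma nestedOfTree_subset_Fstar [NeZero r] [Finite I] (hfree : IsFreeAction r I)
    (hF : IsTrHierarchyOn r univ F) : nestedOfTree r I F ⊆ Fstar r I := by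
  rintro X (⟨J, hJ, -, hfix, hJu, rfl⟩ | ⟨J, hJ, h2, hnf, rfl⟩)
  · have hst := isStable_iff_isFixedSet.mpr hfix
    exact ⟨Or.inl ⟨J, hF.nonempty_of_mem hJ, hst, rfl⟩,
      fun h => hJu (XJ_inj hfree hst (isStable_iff_isFixedSet.mpr isFixedSet_univ) h)⟩
  · have hπ := hF.isFTPartition_orbitSet hJ hnf
    have hcard := hF.two_mul_le_ncard_sUnion_orbitSet hJ hnf h2
    exact ⟨Or.inr ⟨_, hπ, hcard, rfl⟩, fun h => XJ_ne_XJpi hfree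
      ((hF.nonempty_of_mem hJ).mono (subset_univ J)) hπ hcard (mem_singleton_iff.mp h).symm⟩

variable (r) in
def fixedSupport (F : Set (Set I)) (C : Set (Set (I → ℂ))) : Set I :=
  ⋃₀ {K | K ∈ F ∧ IsFixedSet r K ∧ XJ r I K ∈ C}

variable (r) in
def freeBlocks (F : Set (Set I)) (C : Set (Set (I → ℂ))) : Set (Set I) :=
  {P | P ∈ F ∧ 2 ≤ P.ncard ∧ ¬IsFixedSet r P ∧ XJpi r I (orbitSet r P) ∈ C}

variable {C : Set (Set (I → ℂ))}

lemma zdot_mem_freeBlocks (hF : IsTrHierarchyOn r univ F) {P : Set I}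
    (hP : P ∈ freeBlocks r F C) (ζ : mu r) : zdot ζ P ∈ freeBlocks r F C :=
  ⟨hF.zdot_mem ζ hP.1, ncard_zdot ζ P ▸ hP.2.1, isFixedSet_zdot_iff.not.mpr hP.2.2.1,
    orbitSet_zdot ζ P ▸ hP.2.2.2⟩

lemma sInter_eq_XApi (hF : IsTrHierarchyOn r univ F) (hCS : C ⊆ nestedOfTree r I F)
    (hC : C.Nonempty) : ⋂₀ C = XApi r (fixedSupport r F C) (freeBlocks r F C) := by
  ext z
  refine ⟨fun hz => ⟨?_, ?_, ?_⟩, fun hz Y hY => ?_⟩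
  · obtain ⟨Y, hY⟩ := hC
    rcases hCS hY with ⟨J, -, -, -, -, rfl⟩ | ⟨J, -, -, -, rfl⟩
    exacts [(hz _ hY).1, (hz _ hY).1]
  · rintro a ⟨K, ⟨-, -, hK⟩, ha⟩
    exact (hz _ hK).2 a ha
  · rintro P ⟨-, -, -, hP⟩
    exact (hz _ hP).2 P (mem_orbitSet_self P)
  · rcases hCS hY with ⟨J, hJ, -, hfix, -, rfl⟩ | ⟨J, hJ, h2, hnf, rfl⟩
    · exact ⟨hz.1, fun j hj => hz.2.1 j ⟨J, ⟨hJ, hfix, hY⟩, hj⟩⟩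
    · exact ⟨hz.1, fun P ⟨ζ, hP⟩ => hz.2.2 P (hP ▸ zdot_mem_freeBlocks hF ⟨hJ, h2, hnf, hY⟩ ζ)⟩

variable [NeZero r] [Finite I] (hfree : IsFreeAction r I) (hF : IsTrHierarchyOn r univ F)
  (hanti : IsAntichain (· ⊆ ·) C)
include hfree hF hanti

lemma eq_of_subset_of_mem_freeBlocks {P Q : Set I} (hP : P ∈ freeBlocks r F C)
    (hQ : Q ∈ freeBlocks r F C) (hPQ : P ⊆ Q) : P = Q := by
  obtain ⟨hPF, hP2, hPnf, hPC⟩ := hP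
  obtain ⟨hQF, hQ2, hQnf, hQC⟩ := hQ
  have horb : orbitSet r Q = orbitSet r P :=
    XJpi_inj hfree (hF.isFTPartition_orbitSet hQF hQnf)
      (hF.two_mul_le_ncard_sUnion_orbitSet hQF hQnf hQ2) (hF.isFTPartition_orbitSet hPF hPnf)
      (hF.two_mul_le_ncard_sUnion_orbitSet hPF hPnf hP2) (hanti.eq hQC hPC (XJpi_orbitSet_anti hPQ))
  obtain ⟨x, hx⟩ := hF.nonempty_of_mem hPF
  exact (hF.isFTPartition_orbitSet hPF hPnf).pairwiseDisjoint.elim_set (mem_orbitSet_self P)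
    (horb ▸ mem_orbitSet_self Q) x hx (hPQ hx)

lemma disjoint_fixedSupport_of_mem_freeBlocks {P : Set I} (hP : P ∈ freeBlocks r F C) :
    Disjoint P (fixedSupport r F C) := by
  obtain ⟨hPF, hP2, hPnf, hPC⟩ := hP
  refine disjoint_sUnion_right.mpr fun K ⟨hKF, hKfix, hKC⟩ => not_not.mp fun hd => ?_
  rcases hF.isLaminar.subset_or_subset hPF hKF (not_disjoint_iff_nonempty_inter.mp hd) with h | h
  · exact XJ_ne_XJpi hfree (hF.nonempty_of_mem hKF) (hF.isFTPartition_orbitSet hPF hPnf)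
      (hF.two_mul_le_ncard_sUnion_orbitSet hPF hPnf hP2)
      (hanti.eq hKC hPC (XJ_subset_XJpi (sUnion_orbitSet_subset hKfix h)))
  · exact hPnf (hF.isFixedSet_of_subset hKfix (hF.nonempty_of_mem hKF) h hPF)

lemma isAdmissible_freeBlocks : IsAdmissible r (fixedSupport r F C) (freeBlocks r F C) where
  isStable := isStable_sUnion fun ζ K hK => by rw [hK.2.1 ζ]; exact hK
  nontrivial := fun _ hP => nontrivial_of_two_le_ncard hP.2.1
  pairwiseDisjoint := fun P hP Q hQ hne => not_not.mp fun hd => hne <|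
    (hF.isLaminar.subset_or_subset hP.1 hQ.1 (not_disjoint_iff_nonempty_inter.mp hd)).elim
      (eq_of_subset_of_mem_freeBlocks hfree hF hanti hP hQ)
      fun h => (eq_of_subset_of_mem_freeBlocks hfree hF hanti hQ hP h).symm
  zdot_mem := fun ζ _ hP => zdot_mem_freeBlocks hF hP ζ
  eq_one_of_zdot_eq := fun _ hP _ h => hF.eq_one_of_zdot_eq hP.1 hP.2.2.1 h
  disjoint := fun _ hP => disjoint_fixedSupport_of_mem_freeBlocks hfree hF hanti hP

/-- Lying in `F` forces `freeBlocks = ∅`, and then the fixed vertices form a chain, or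
`fixedSupport = ∅` and `freeBlocks` is a single orbit; either way the antichain is a singleton. -/
lemma sInter_not_mem_Fcal (hCS : C ⊆ nestedOfTree r I F) (hC : C.Nontrivial) :
    ⋂₀ C ∉ Fcal r I := by
  have hc := isAdmissible_freeBlocks hfree hF hanti
  rw [sInter_eq_XApi hF hCS hC.nonempty]
  refine fun hmem => hC.not_subsingleton ?_
  rcases hmem with ⟨K, -, hK, hEq⟩ | ⟨π, hπ, hcard, hEq⟩
  · rw [XJ_eq_XApi] at hEq
    have hempty := (XApi_inj hfree hc (isAdmissible_empty hK) hEq).2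
    have hXJ : ∀ Y ∈ C, ∃ K ∈ F, IsFixedSet r K ∧ Y = XJ r I K := fun Y hY => by
      rcases hCS hY with ⟨K, hK, -, hfix, -, rfl⟩ | ⟨J, hJ, h2, hnf, rfl⟩
      · exact ⟨K, hK, hfix, rfl⟩
      · exact absurd (hempty ▸ ⟨hJ, h2, hnf, hY⟩ : J ∈ (∅ : Set (Set I))) (notMem_empty J)
    intro Y hY Y' hY'
    obtain ⟨K, hK, hKfix, rfl⟩ := hXJ Y hY
    obtain ⟨K', hK', hK'fix, rfl⟩ := hXJ Y' hY'
    rcases hF.subset_or_subset_of_isFixedSet hK hK' hKfix hK'fix with h | h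
    exacts [(hanti.eq hY' hY (XJ_anti h)).symm, hanti.eq hY hY' (XJ_anti h)]
  · rw [XJpi_eq_XApi] at hEq
    obtain ⟨hA, hPs⟩ := XApi_inj hfree hc (hπ.isAdmissible hcard) hEq
    have hXJpi : ∀ Y ∈ C, Y = XJpi r I π := fun Y hY => by
      rcases hCS hY with ⟨K, hK, -, hfix, -, rfl⟩ | ⟨J, hJ, h2, hnf, rfl⟩
      · obtain ⟨x, hx⟩ := hF.nonempty_of_mem hK
        exact absurd (hA ▸ ⟨K, ⟨hK, hfix, hY⟩, hx⟩ : x ∈ (∅ : Set I)) (notMem_empty x)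
      · exact congrArg _ (hπ.orbitSet_eq (hPs ▸ ⟨hJ, h2, hnf, hY⟩ : J ∈ π))
    exact fun Y hY Y' hY' => (hXJpi Y hY).trans (hXJpi Y' hY').symm

end TreeToNested

lemma isNested_nestedOfTree [NeZero r] [Finite I] (hfree : IsFreeAction r I) {F : Set (Set I)}
    (hF : IsTrHierarchyOn r univ F) : IsNested r I (nestedOfTree r I F) :=
  ⟨nestedOfTree_subset_Fstar hfree hF, fun _ hCS hcard hanti =>
    sInter_not_mem_Fcal hfree hF hanti hCS (Finset.one_lt_card_iff_nontrivial.mp hcard)⟩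

lemma treeOfNested_nestedOfTree [NeZero r] [Finite I] (hfree : IsFreeAction r I)
    {F : Set (Set I)} (hF : IsTrHierarchyOn r univ F) :
    treeOfNested r (nestedOfTree r I F) = F := by
  ext J
  constructor
  · rintro (rfl | ⟨i, rfl⟩ | ⟨hst, hne, hX⟩ | ⟨π, hπ, hcard, hX, hJπ⟩)
    · exact hF.univ_mem
    · exact hF.singleton_mem i
    · rcases hX with ⟨K, hK, -, hfix, -, hEq⟩ | ⟨K, hK, h2, hnf, hEq⟩
      · rwa [XJ_inj hfree hst (isStable_iff_isFixedSet.mpr hfix) hEq]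
      · exact absurd hEq (XJ_ne_XJpi hfree hne (hF.isFTPartition_orbitSet hK hnf)
          (hF.two_mul_le_ncard_sUnion_orbitSet hK hnf h2))
    · rcases hX with ⟨K, hK, -, -, -, hEq⟩ | ⟨K, hK, h2, hnf, hEq⟩
      · exact absurd hEq.symm (XJ_ne_XJpi hfree (hF.nonempty_of_mem hK) hπ hcard)
      · obtain ⟨ζ, rfl⟩ : J ∈ orbitSet r K := XJpi_inj hfree hπ hcard
          (hF.isFTPartition_orbitSet hK hnf) (hF.two_mul_le_ncard_sUnion_orbitSet hK hnf h2)
          hEq ▸ hJπ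
        exact hF.zdot_mem ζ hK
  · intro hJ
    by_cases hJu : J = univ
    · exact Or.inl hJu
    rcases lt_or_ge J.ncard 2 with h1 | h2
    · obtain ⟨i, rfl⟩ := ncard_eq_one.mp (show J.ncard = 1 by
        have := (ncard_pos (toFinite J)).mpr (hF.nonempty_of_mem hJ); omega)
      exact Or.inr (Or.inl ⟨i, rfl⟩)
    by_cases hfix : IsFixedSet r J
    · exact Or.inr (Or.inr (Or.inl ⟨isStable_iff_isFixedSet.mpr hfix, hF.nonempty_of_mem hJ,
        Or.inl ⟨J, hJ, h2, hfix, hJu, rfl⟩⟩))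
    · exact Or.inr (Or.inr (Or.inr ⟨_, hF.isFTPartition_orbitSet hJ hfix,
        hF.two_mul_le_ncard_sUnion_orbitSet hJ hfix h2, Or.inr ⟨J, hJ, h2, hfix, rfl⟩,
        mem_orbitSet_self J⟩))

/--
Let `r ≥ 2` and let `I` be a nonempty finite set with a free
`μ_r`-action.  For every `T ∈ T(r,I)` the set `S_T` is a nested subset of `F*`, and
`T ↦ S_T` is a bijection from `T(r,I)` onto the set of all nested subsets of `F*`.
-/
theorem trees_nested_sets_bijection (hr : 2 ≤ r) [Fintype I] [Nonempty I]
    (hfree : ∀ (ζ : mu r) (x : I), ζ • x = x → ζ = 1) :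
    Set.BijOn (nestedOfTree r I) {F | IsTrHierarchyOn r (Set.univ : Set I) F}
      {S | IsNested r I S} := by
  have : NeZero r := ⟨by omega⟩
  have : Nontrivial (mu r) := nontrivial_mu hr
  exact InvOn.bijOn
    ⟨fun F hF => treeOfNested_nestedOfTree hfree hF, fun S hS => nestedOfTree_treeOfNested hfree hS⟩
    (fun F hF => isNested_nestedOfTree hfree hF) fun S hS => isTrHierarchyOn_treeOfNested hS hfree

end
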